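/- arXiv:1001.2362 — 4 statements merged into one kernel-verified Lean document; each statement's English description precedes it below -/
import Mathlib

section
/- Let P_Ω and P_T be orthogonal projections on a finite-dimensional inner product space with ‖P_Ω P_T‖ ≤ 1 − ε for some ε ∈ (0,1). Then for every vector H, ‖P_Ω H‖ ≤ ((1−ε)/ε)·‖P_{Ω⊥} H‖ + (1/ε)·‖P_{T⊥} H‖. -/
/-!
Split `P x = P (Q x) + P (x - Q x)`. The first term is at most `(1 - ε) ‖x‖` by the hypothesis on
`‖P ∘ Q‖`, the second at most `‖x - Q x‖` since `P` is a contraction, and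
`‖x‖ ≤ ‖P x‖ + ‖x - P x‖`. Solving the resulting inequality for `‖P x‖` gives the bound.
-/

namespace ContinuousLinearMap

variable {𝕜 E : Type*} [NontriviallyNormedField 𝕜] [SeminormedAddCommGroup E] [NormedSpace 𝕜 E]

theorem norm_apply_le_of_norm_comp_le {P Q : E →L[𝕜] E} {c : ℝ} (hP : ‖P‖ ≤ 1)
    (hPQ : ‖P ∘L Q‖ ≤ c) (x : E) : ‖P x‖ ≤ c * ‖x‖ + ‖x - Q x‖ := by
  have hPQx : ‖P (Q x)‖ ≤ c * ‖x‖ := (P ∘L Q).le_of_opNorm_le hPQ x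
  have hPr : ‖P (x - Q x)‖ ≤ ‖x - Q x‖ := by simpa using P.le_of_opNorm_le hP (x - Q x)
  calc ‖P x‖ = ‖P (Q x) + P (x - Q x)‖ := by rw [← map_add, add_sub_cancel]
    _ ≤ c * ‖x‖ + ‖x - Q x‖ := (norm_add_le _ _).trans (add_le_add hPQx hPr)

theorem norm_apply_le_of_norm_comp_le_one_sub {P Q : E →L[𝕜] E} {ε : ℝ} (hε : 0 < ε)
    (hP : ‖P‖ ≤ 1) (hPQ : ‖P ∘L Q‖ ≤ 1 - ε) (x : E) :
    ‖P x‖ ≤ ((1 - ε) / ε) * ‖x - P x‖ + (1 / ε) * ‖x - Q x‖ := by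
  have hsplit := norm_apply_le_of_norm_comp_le hP hPQ x
  have hx : ‖x‖ ≤ ‖P x‖ + ‖x - P x‖ := norm_le_norm_add_norm_sub' x (P x)
  have hc : 0 ≤ 1 - ε := (norm_nonneg _).trans hPQ
  rw [div_mul_eq_mul_div, div_mul_eq_mul_div, one_mul, ← add_div, le_div_iff₀ hε]
  nlinarith [mul_le_mul_of_nonneg_left hx hc]

end ContinuousLinearMap

theorem norm_proj_le_of_opNorm_le_general
    {E : Type*} [NormedAddCommGroup E] [InnerProductSpace ℝ E]
    [FiniteDimensional ℝ E]
    (Ω : Submodule ℝ E)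
    (PΩ PT : E →L[ℝ] E)
    (hPΩ : PΩ = Ω.subtypeL.comp (Submodule.orthogonalProjectionOnto Ω))
    (ε : ℝ) (hε : ε ∈ Set.Ioo (0:ℝ) 1)
    (h : ‖PΩ.comp PT‖ ≤ 1 - ε) :
    ∀ H : E, ‖PΩ H‖ ≤ ((1 - ε) / ε) * ‖H - PΩ H‖ + (1 / ε) * ‖H - PT H‖ :=
  PΩ.norm_apply_le_of_norm_comp_le_one_sub hε.1 (hPΩ ▸ Ω.starProjection_norm_le) h

theorem norm_proj_le_of_opNorm_le
    {E : Type*} [NormedAddCommGroup E] [InnerProductSpace ℝ E]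
    [FiniteDimensional ℝ E]
    (Ω T : Submodule ℝ E)
    (PΩ PT : E →L[ℝ] E)
    (hPΩ : PΩ = Ω.subtypeL.comp (Submodule.orthogonalProjectionOnto Ω))
    (hPT : PT = T.subtypeL.comp (Submodule.orthogonalProjectionOnto T))
    (ε : ℝ) (hε : ε ∈ Set.Ioo (0:ℝ) 1)
    (h : ‖PΩ.comp PT‖ ≤ 1 - ε) :
    ∀ H : E, ‖PΩ H‖ ≤ ((1 - ε) / ε) * ‖H - PΩ H‖ + (1 / ε) * ‖H - PT H‖ :=
  norm_proj_le_of_opNorm_le_general Ω PΩ PT hPΩ ε hε h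
end

section
/- Let P_Ω and P_T be orthogonal projections with ‖P_Ω P_T‖ < 1, and let R := P_{T⊥} ∘ Σ_{k≥1} (P_Ω P_T P_Ω)^k. Then ‖R‖ ≤ (‖P_{Ω⊥} P_T‖ · ‖P_Ω P_T‖) / (1 − ‖P_Ω P_T‖²). -/
/-! Since `P_T` is idempotent, `P_Ω P_T P_Ω = (P_Ω P_T)(P_T P_Ω)`, so the `k`-th term of the series
composed with `P_{T⊥}` factors as `P_{T⊥} P_Ω P_T · P_T P_Ω · (P_Ω P_T P_Ω)^k`. The first factor equals
`-P_{T⊥} P_{Ω⊥} P_T`, of norm at most `‖P_{Ω⊥} P_T‖`; the second is the adjoint of `P_Ω P_T`, of norm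
`‖P_Ω P_T‖`; the third has norm at most `‖P_Ω P_T‖^{2k}`. Summing the geometric series gives the bound. -/

lemma IsIdempotentElem.one_sub_mul_mul_eq_neg {R : Type*} [Ring R] {q : R}
    (hq : IsIdempotentElem q) (p : R) :
    (1 - q) * (p * q) = -((1 - q) * ((1 - p) * q)) := by
  rw [eq_neg_iff_add_eq_zero, ← mul_add, ← add_mul, add_sub_cancel, one_mul,
    hq.one_sub_mul_self]

lemma IsIdempotentElem.mul_mul_eq_mul_mul_mul {R : Type*} [Semigroup R] {q : R}
    (hq : IsIdempotentElem q) (p : R) : p * q * p = (p * q) * (q * p) := by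
  rw [← mul_assoc, mul_assoc p q q, hq.eq]

lemma CStarRing.norm_pow_le {A : Type*} [NormedRing A] [StarRing A] [CStarRing A] (a : A)
    (n : ℕ) : ‖a ^ n‖ ≤ ‖a‖ ^ n := by
  rcases n.eq_zero_or_pos with rfl | hn
  · simpa using IsStarProjection.norm_le _ (.one A)
  · exact norm_pow_le' a hn

namespace IsStarProjection

variable {A : Type*} [NormedRing A] [StarRing A] [CStarRing A] {p q : A}

lemma norm_mul_comm (hp : IsStarProjection p) (hq : IsStarProjection q) :
    ‖q * p‖ = ‖p * q‖ := by
  rw [← norm_star, star_mul, hp.isSelfAdjoint.star_eq, hq.isSelfAdjoint.star_eq]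

lemma norm_one_sub_mul_mul_le (hq : IsStarProjection q) (p : A) :
    ‖(1 - q) * (p * q)‖ ≤ ‖(1 - p) * q‖ := by
  rw [hq.isIdempotentElem.one_sub_mul_mul_eq_neg, norm_neg]
  calc ‖(1 - q) * ((1 - p) * q)‖ ≤ ‖1 - q‖ * ‖(1 - p) * q‖ := norm_mul_le _ _
    _ ≤ 1 * ‖(1 - p) * q‖ := by gcongr; exact hq.one_sub.norm_le
    _ = ‖(1 - p) * q‖ := one_mul _

lemma norm_mul_mul_le_norm_mul_sq (hp : IsStarProjection p) (hq : IsStarProjection q) :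
    ‖p * q * p‖ ≤ ‖p * q‖ ^ 2 := by
  rw [hq.isIdempotentElem.mul_mul_eq_mul_mul_mul, sq]
  exact (norm_mul_le _ _).trans_eq (by rw [hp.norm_mul_comm hq])

lemma norm_one_sub_mul_pow_succ_le (hp : IsStarProjection p) (hq : IsStarProjection q) (k : ℕ) :
    ‖(1 - q) * (p * q * p) ^ (k + 1)‖ ≤ ‖(1 - p) * q‖ * ‖p * q‖ * (‖p * q‖ ^ 2) ^ k := by
  have hfactor :
      (1 - q) * (p * q * p) ^ (k + 1) = (1 - q) * (p * q) * (q * p) * (p * q * p) ^ k := by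
    rw [pow_succ', hq.isIdempotentElem.mul_mul_eq_mul_mul_mul p]
    simp only [mul_assoc]
  calc ‖(1 - q) * (p * q * p) ^ (k + 1)‖
      ≤ ‖(1 - q) * (p * q)‖ * ‖q * p‖ * ‖p * q * p‖ ^ k := by
        rw [hfactor]
        refine (norm_mul_le _ _).trans ?_
        gcongr
        · exact norm_mul_le _ _
        · exact CStarRing.norm_pow_le _ k
    _ ≤ ‖(1 - p) * q‖ * ‖p * q‖ * (‖p * q‖ ^ 2) ^ k := by
        rw [hp.norm_mul_comm hq]
        gcongr
        · exact hq.norm_one_sub_mul_mul_le p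
        · exact hp.norm_mul_mul_le_norm_mul_sq hq

theorem norm_one_sub_mul_tsum_pow_succ_le [HasSummableGeomSeries A]
    (hp : IsStarProjection p) (hq : IsStarProjection q) (hpq : ‖p * q‖ < 1) :
    ‖(1 - q) * ∑' k : ℕ, (p * q * p) ^ (k + 1)‖ ≤
      ‖(1 - p) * q‖ * ‖p * q‖ / (1 - ‖p * q‖ ^ 2) := by
  have hsq : ‖p * q‖ ^ 2 < 1 := pow_lt_one₀ (norm_nonneg _) hpq two_ne_zero
  have hsummable : Summable fun k : ℕ ↦ (p * q * p) ^ (k + 1) :=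
    (summable_nat_add_iff 1).mpr <|
      summable_geometric_of_norm_lt_one ((hp.norm_mul_mul_le_norm_mul_sq hq).trans_lt hsq)
  rw [← hsummable.tsum_mul_left, div_eq_mul_inv]
  exact tsum_of_norm_bounded ((hasSum_geometric_of_lt_one (by positivity) hsq).mul_left _)
    (hp.norm_one_sub_mul_pow_succ_le hq)

end IsStarProjection

theorem opNorm_R_le
    {E : Type*} [NormedAddCommGroup E] [InnerProductSpace ℝ E]
    [FiniteDimensional ℝ E]
    (Ω T : Submodule ℝ E)
    (PΩ PT : E →L[ℝ] E)
    (hPΩ : PΩ = Ω.subtypeL.comp (Ω.orthogonalProjectionOnto))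
    (hPT : PT = T.subtypeL.comp (T.orthogonalProjectionOnto))
    (hσ : ‖PΩ.comp PT‖ < 1)
    (R : E →L[ℝ] E)
    (hR : R = (1 - PT).comp (∑' k : ℕ, (PΩ.comp (PT.comp PΩ)) ^ (k + 1))) :
    ‖R‖ ≤ (‖(1 - PΩ).comp PT‖ * ‖PΩ.comp PT‖) / (1 - ‖PΩ.comp PT‖ ^ 2) := by
  have hΩ : IsStarProjection PΩ := hPΩ ▸ isStarProjection_starProjection
  have hT : IsStarProjection PT := hPT ▸ isStarProjection_starProjection
  simp only [← ContinuousLinearMap.mul_def, ← mul_assoc] at hσ hR ⊢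
  exact hR ▸ hΩ.norm_one_sub_mul_tsum_pow_succ_le hT hσ
end

section
/- Let L₀, S₀ be n×n real matrices, H an n×n real matrix, W₀ a matrix with P_T W₀ = 0, ‖W₀‖ ≤ 1, and ⟨W₀, H⟩ = ‖P_{T⊥} H‖_*, and F₀ with P_Ω F₀ = 0, ‖F₀‖_∞ ≤ 1, and ⟨F₀, H⟩ = −‖P_{Ω⊥} H‖₁. Then ‖L₀ + H‖_* + λ‖S₀ − H‖₁ ≥ ‖L₀‖_* + λ‖S₀‖₁ + ‖P_{T⊥}H‖_* + λ‖P_{Ω⊥}H‖₁ + ⟨UV* − λ·sgn(S₀), H⟩, where UV* + W₀ is a subgradient of the nuclear norm at L₀ and sgn(S₀) + F₀ is a subgradient of the ℓ¹-norm at S₀. -/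
open Matrix

noncomputable def frobInner {n : ℕ} (A B : Matrix (Fin n) (Fin n) ℝ) : ℝ :=
  Matrix.trace (Aᵀ * B)

noncomputable def matSpectralNorm {n : ℕ} (A : Matrix (Fin n) (Fin n) ℝ) : ℝ :=
  ‖Matrix.toEuclideanCLM (𝕜 := ℝ) A‖

noncomputable def nuclearNorm {n : ℕ} (A : Matrix (Fin n) (Fin n) ℝ) : ℝ :=
  ∑ i, Real.sqrt ((show (Aᵀ * A).IsHermitian from Matrix.isHermitian_conjTranspose_mul_self A).eigenvalues i)

noncomputable def l1Norm {n : ℕ} (A : Matrix (Fin n) (Fin n) ℝ) : ℝ :=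
  ∑ i, ∑ j, |A i j|

noncomputable def signMatrix {n : ℕ} (A : Matrix (Fin n) (Fin n) ℝ) :
    Matrix (Fin n) (Fin n) ℝ :=
  Matrix.of fun i j => Real.sign (A i j)

def projSupp {n : ℕ} (Ω : Set (Fin n × Fin n)) [DecidablePred (· ∈ Ω)]
    (M : Matrix (Fin n) (Fin n) ℝ) : Matrix (Fin n) (Fin n) ℝ :=
  Matrix.of fun i j => if (i, j) ∈ Ω then M i j else 0

def projT {n r : ℕ} (U V : Matrix (Fin n) (Fin r) ℝ)
    (M : Matrix (Fin n) (Fin n) ℝ) : Matrix (Fin n) (Fin n) ℝ :=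
  U * Uᵀ * M + M * (V * Vᵀ) - U * Uᵀ * M * (V * Vᵀ)

lemma frobInner_add_left {n : ℕ} (A B C : Matrix (Fin n) (Fin n) ℝ) :
    frobInner (A + B) C = frobInner A C + frobInner B C := by
  simp only [frobInner, transpose_add, add_mul, trace_add]

lemma frobInner_sub_left {n : ℕ} (A B C : Matrix (Fin n) (Fin n) ℝ) :
    frobInner (A - B) C = frobInner A C - frobInner B C := by
  simp only [frobInner, transpose_sub, sub_mul, trace_sub]

lemma frobInner_smul_left {n : ℕ} (c : ℝ) (A B : Matrix (Fin n) (Fin n) ℝ) :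
    frobInner (c • A) B = c * frobInner A B := by
  simp only [frobInner, transpose_smul, smul_mul, trace_smul, smul_eq_mul]

theorem pcp_subgradient_bound_general {n r : ℕ}
    (L₀ S₀ H W₀ F₀ : Matrix (Fin n) (Fin n) ℝ)
    (U V : Matrix (Fin n) (Fin r) ℝ)
    (Ω : Set (Fin n × Fin n)) [DecidablePred (· ∈ Ω)]
    (lam : ℝ) (hlam : 0 < lam)
    -- W₀ : P_T W₀ = 0, ‖W₀‖ ≤ 1, ⟨W₀, H⟩ = ‖P_{T⊥} H‖_*
    (hW₀H : frobInner W₀ H = nuclearNorm (H - projT U V H))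
    -- F₀ : P_Ω F₀ = 0, ‖F₀‖_∞ ≤ 1, ⟨F₀, H⟩ = -‖P_{Ω⊥} H‖₁
    (hF₀H : frobInner F₀ H = -(l1Norm (H - projSupp Ω H)))
    -- UV* + W₀ is a subgradient of the nuclear norm at L₀
    (hsubNuc : ∀ H' : Matrix (Fin n) (Fin n) ℝ,
      nuclearNorm (L₀ + H') ≥ nuclearNorm L₀ + frobInner (U * Vᵀ + W₀) H')
    -- sgn(S₀) + F₀ is a subgradient of the ℓ¹ norm at S₀
    (hsubL1 : ∀ H' : Matrix (Fin n) (Fin n) ℝ,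
      l1Norm (S₀ - H') ≥ l1Norm S₀ - frobInner (signMatrix S₀ + F₀) H') :
    nuclearNorm (L₀ + H) + lam * l1Norm (S₀ - H) ≥
      nuclearNorm L₀ + lam * l1Norm S₀ +
        nuclearNorm (H - projT U V H) + lam * l1Norm (H - projSupp Ω H) +
        frobInner (U * Vᵀ - lam • signMatrix S₀) H := by
  have hNuc : nuclearNorm L₀ + frobInner (U * Vᵀ) H + nuclearNorm (H - projT U V H)
      ≤ nuclearNorm (L₀ + H) := by
    simpa only [frobInner_add_left, hW₀H, ← add_assoc] using hsubNuc H
  have hL1 : l1Norm S₀ - frobInner (signMatrix S₀) H + l1Norm (H - projSupp Ω H)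
      ≤ l1Norm (S₀ - H) := by
    have h := hsubL1 H
    rw [frobInner_add_left, hF₀H] at h
    linarith
  have hL1_scaled := mul_le_mul_of_nonneg_left hL1 hlam.le
  rw [frobInner_sub_left, frobInner_smul_left]
  linarith

/-- subgradient lower bound for the PCP objective. -/
theorem pcp_subgradient_bound {n r : ℕ}
    (L₀ S₀ H W₀ F₀ : Matrix (Fin n) (Fin n) ℝ)
    (U V : Matrix (Fin n) (Fin r) ℝ)
    (hU : Uᵀ * U = 1) (hV : Vᵀ * V = 1)
    (Ω : Set (Fin n × Fin n)) [DecidablePred (· ∈ Ω)]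
    (hΩ : Ω = {p : Fin n × Fin n | S₀ p.1 p.2 ≠ 0})
    (lam : ℝ) (hlam : 0 < lam)
    -- W₀ : P_T W₀ = 0, ‖W₀‖ ≤ 1, ⟨W₀, H⟩ = ‖P_{T⊥} H‖_*
    (hW₀T : projT U V W₀ = 0)
    (hW₀norm : matSpectralNorm W₀ ≤ 1)
    (hW₀H : frobInner W₀ H = nuclearNorm (H - projT U V H))
    -- F₀ : P_Ω F₀ = 0, ‖F₀‖_∞ ≤ 1, ⟨F₀, H⟩ = -‖P_{Ω⊥} H‖₁
    (hF₀Ω : projSupp Ω F₀ = 0)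
    (hF₀norm : ∀ i j, |F₀ i j| ≤ 1)
    (hF₀H : frobInner F₀ H = -(l1Norm (H - projSupp Ω H)))
    -- UV* + W₀ is a subgradient of the nuclear norm at L₀
    (hsubNuc : ∀ H' : Matrix (Fin n) (Fin n) ℝ,
      nuclearNorm (L₀ + H') ≥ nuclearNorm L₀ + frobInner (U * Vᵀ + W₀) H')
    -- sgn(S₀) + F₀ is a subgradient of the ℓ¹ norm at S₀
    (hsubL1 : ∀ H' : Matrix (Fin n) (Fin n) ℝ,
      l1Norm (S₀ - H') ≥ l1Norm S₀ - frobInner (signMatrix S₀ + F₀) H') :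
    nuclearNorm (L₀ + H) + lam * l1Norm (S₀ - H) ≥
      nuclearNorm L₀ + lam * l1Norm S₀ +
        nuclearNorm (H - projT U V H) + lam * l1Norm (H - projSupp Ω H) +
        frobInner (U * Vᵀ - lam • signMatrix S₀) H :=
  pcp_subgradient_bound_general L₀ S₀ H W₀ F₀ U V Ω lam hlam hW₀H hF₀H hsubNuc hsubL1
end

section
/- Let U, V ∈ ℝ^{n×r} have orthonormal columns and satisfy the incoherence conditions max_i ‖U*e_i‖² ≤ μr/n and max_i ‖V*e_i‖² ≤ μr/n. Then for every pair (i,j), the matrix e_i e_j* satisfies ‖P_T(e_i e_j*)‖_F² ≤ 2μr/n, where P_T(M) = UU*M + MVV* − UU*MVV*. -/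
open Matrix

noncomputable def frobNorm {n : ℕ} (A : Matrix (Fin n) (Fin n) ℝ) : ℝ :=
  Real.sqrt (∑ i, ∑ j, (A i j) ^ 2)

/-! With the orthogonal projections `P = UUᵀ` and `Q = VVᵀ`,
`P_T(e_i e_jᵀ) = (P e_i) e_jᵀ + ((1 - P) e_i) (Q e_j)ᵀ`, a sum of two rank-one matrices that are
orthogonal in the Frobenius inner product since `P (1 - P) = 0`. Hence
`‖P_T(e_i e_jᵀ)‖_F² = P_ii + (1 - P_ii) Q_jj ≤ P_ii + Q_jj`, and `P_ii = ‖Uᵀ e_i‖²`,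
`Q_jj = ‖Vᵀ e_j‖²` are each at most `μr/n` by incoherence. -/

namespace Matrix

variable {m n p R : Type*} [CommRing R]

theorem sum_sq_vecMulVec_add_vecMulVec [Fintype m] [Fintype n] (x w : m → R) (y z : n → R) :
    ∑ a, ∑ b, (vecMulVec x y + vecMulVec w z : Matrix m n R) a b ^ 2 =
      (x ⬝ᵥ x) * (y ⬝ᵥ y) + 2 * (x ⬝ᵥ w) * (y ⬝ᵥ z) + (w ⬝ᵥ w) * (z ⬝ᵥ z) := by
  simp only [dotProduct, mul_assoc (2 : R), Finset.sum_mul_sum]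
  simp only [Finset.mul_sum, ← Finset.sum_add_distrib]
  refine Finset.sum_congr rfl fun a _ => Finset.sum_congr rfl fun b _ => ?_
  simp only [Matrix.add_apply, vecMulVec_apply]
  ring

theorem IsSymm.mulVec_dotProduct_mulVec [Fintype n] [Fintype p] {P : Matrix n n R}
    (hP : P.IsSymm) (Q : Matrix n p R) (v : n → R) (w : p → R) :
    P *ᵥ v ⬝ᵥ Q *ᵥ w = v ⬝ᵥ (P * Q) *ᵥ w := by
  rw [← mulVec_mulVec, dotProduct_mulVec v, ← mulVec_transpose, hP.eq]

theorem IsSymm.mulVec_dotProduct_mulVec_self [Fintype n] {P : Matrix n n R} (hP : P.IsSymm)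
    (hPi : IsIdempotentElem P) (v : n → R) : P *ᵥ v ⬝ᵥ P *ᵥ v = v ⬝ᵥ P *ᵥ v := by
  rw [hP.mulVec_dotProduct_mulVec, hPi.eq]

theorem isSymm_mul_transpose [Fintype m] (U : Matrix n m R) : (U * Uᵀ).IsSymm :=
  transpose_mul _ _

theorem isIdempotentElem_mul_transpose [Fintype n] [Fintype m] [DecidableEq m]
    {U : Matrix n m R} (hU : Uᵀ * U = 1) : IsIdempotentElem (U * Uᵀ) := by
  rw [IsIdempotentElem, Matrix.mul_assoc, ← Matrix.mul_assoc Uᵀ, hU, Matrix.one_mul]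

theorem mul_transpose_self_apply_self [Fintype m] (U : Matrix n m R) (i : n) :
    (U * Uᵀ) i i = ∑ k, U i k ^ 2 := by
  simp [mul_apply, sq]

end Matrix

theorem frobNorm_sq {n : ℕ} (A : Matrix (Fin n) (Fin n) ℝ) :
    frobNorm A ^ 2 = ∑ i, ∑ j, A i j ^ 2 :=
  Real.sq_sqrt (by positivity)

theorem projT_single_one {n r : ℕ} (U V : Matrix (Fin n) (Fin r) ℝ) (i j : Fin n) :
    projT U V (single i j 1) =
      vecMulVec ((U * Uᵀ) *ᵥ Pi.single i 1) (Pi.single j 1) +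
        vecMulVec ((1 - U * Uᵀ) *ᵥ Pi.single i 1) ((V * Vᵀ) *ᵥ Pi.single j 1) := by
  have hQ : Pi.single j 1 ᵥ* (V * Vᵀ) = (V * Vᵀ) *ᵥ Pi.single j 1 := by
    rw [← mulVec_transpose, (isSymm_mul_transpose V).eq]
  have hsplit : projT U V (single i j 1) =
      U * Uᵀ * single i j 1 + (1 - U * Uᵀ) * single i j 1 * (V * Vᵀ) := by
    rw [projT, sub_mul, sub_mul, Matrix.one_mul]
    abel
  rw [hsplit, single_eq_single_vecMulVec_single, Matrix.mul_vecMulVec, Matrix.mul_vecMulVec,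
    vecMulVec_mul, hQ]

theorem frobNorm_projT_single_sq {n r : ℕ} (U V : Matrix (Fin n) (Fin r) ℝ)
    (hU : Uᵀ * U = 1) (hV : Vᵀ * V = 1) (i j : Fin n) :
    frobNorm (projT U V (single i j 1)) ^ 2 =
      (U * Uᵀ) i i + (1 - (U * Uᵀ) i i) * (V * Vᵀ) j j := by
  set P := U * Uᵀ
  set Q := V * Vᵀ
  have hP : P.IsSymm := isSymm_mul_transpose U
  have hPi : IsIdempotentElem P := isIdempotentElem_mul_transpose hU
  have hQ : Q.IsSymm := isSymm_mul_transpose V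
  have hQi : IsIdempotentElem Q := isIdempotentElem_mul_transpose hV
  have hcross : P *ᵥ Pi.single i 1 ⬝ᵥ (1 - P) *ᵥ Pi.single i 1 = 0 := by
    rw [hP.mulVec_dotProduct_mulVec, hPi.mul_one_sub_self, zero_mulVec, dotProduct_zero]
  rw [frobNorm_sq, projT_single_one, sum_sq_vecMulVec_add_vecMulVec, hcross,
    hP.mulVec_dotProduct_mulVec_self hPi,
    (isSymm_one.sub hP).mulVec_dotProduct_mulVec_self hPi.one_sub,
    hQ.mulVec_dotProduct_mulVec_self hQi]
  simp

theorem projT_stdBasis_frobNorm_sq_le_general {n r : ℕ}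
    (U V : Matrix (Fin n) (Fin r) ℝ)
    (hU : Uᵀ * U = 1) (hV : Vᵀ * V = 1)
    (μ : ℝ)
    (hUinc : ∀ i : Fin n, ∑ k, (U i k) ^ 2 ≤ μ * r / n)
    (hVinc : ∀ i : Fin n, ∑ k, (V i k) ^ 2 ≤ μ * r / n) :
    ∀ i j : Fin n,
      frobNorm (projT U V (Matrix.single i j 1)) ^ 2 ≤ 2 * μ * r / n := by
  intro i j
  have hu : 0 ≤ ∑ k, U i k ^ 2 := by positivity
  have hv : 0 ≤ ∑ k, V j k ^ 2 := by positivity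
  calc frobNorm (projT U V (single i j 1)) ^ 2
      = ∑ k, U i k ^ 2 + (1 - ∑ k, U i k ^ 2) * ∑ k, V j k ^ 2 := by
        rw [frobNorm_projT_single_sq U V hU hV, mul_transpose_self_apply_self,
          mul_transpose_self_apply_self]
    _ ≤ ∑ k, U i k ^ 2 + ∑ k, V j k ^ 2 := by nlinarith [mul_nonneg hu hv]
    _ ≤ μ * r / n + μ * r / n := add_le_add (hUinc i) (hVinc j)
    _ = 2 * μ * r / n := by ring

/-- incoherence implies `‖P_T(e_i e_jᵀ)‖_F² ≤ 2μr/n`. -/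
theorem projT_stdBasis_frobNorm_sq_le {n r : ℕ} (hn : 0 < n)
    (U V : Matrix (Fin n) (Fin r) ℝ)
    (hU : Uᵀ * U = 1) (hV : Vᵀ * V = 1)
    (μ : ℝ) (hμ : 0 < μ) (hr : r ≤ n)
    (hUinc : ∀ i : Fin n, ∑ k, (U i k) ^ 2 ≤ μ * r / n)
    (hVinc : ∀ i : Fin n, ∑ k, (V i k) ^ 2 ≤ μ * r / n) :
    ∀ i j : Fin n,
      frobNorm (projT U V (Matrix.single i j 1)) ^ 2 ≤ 2 * μ * r / n :=
  projT_stdBasis_frobNorm_sq_le_general U V hU hV μ hUinc hVinc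
end
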